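/- For a monoid S the following are equivalent: (i) every right ideal of S is InD-injective; (ii) every indecomposable right ideal of S is InD-injective; (iii) every right ideal of S is PInD-injective; (iv) every indecomposable right ideal of S is PInD-injective; (v) every indecomposable right ideal of S is injective; (vi) S is a regular right self-injective monoid all of whose indecomposable right ideals are principal. -/
import Mathlib


universe u

/-- A right `S`-act structure on a nonempty type `A`: a right action of the monoid `S`. -/
class RightAct (S : Type u) [Monoid S] (A : Type u) : Type u where
  act : A → S → A
  act_one : ∀ a : A, act a 1 = a
  act_mul : ∀ (a : A) (s t : S), act (act a s) t = act a (s * t)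
  nonempty : Nonempty A

infixl:70 " ⊛ " => RightAct.act

/-- `S` is left reversible: every two right ideals (equiv. principal ones) intersect. -/
def LeftReversible (S : Type u) [Monoid S] : Prop :=
  ∀ a b : S, ∃ u v : S, a * u = b * v

/-- A left zero element of the monoid `S`. -/
def IsLeftZero (S : Type u) [Monoid S] (z : S) : Prop :=
  ∀ s : S, z * s = z

/-- `f : A → B` is a homomorphism of right `S`-acts. -/
def IsActHom (S : Type u) [Monoid S] {A B : Type u} [RightAct S A] [RightAct S B]
    (f : A → B) : Prop :=
  ∀ (a : A) (s : S), f (a ⊛ s) = f a ⊛ s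

/-- The restriction of `f : A → B` to the subset `C` is a homomorphism of right `S`-acts. -/
def IsActHomOn (S : Type u) [Monoid S] {A B : Type u} [RightAct S A] [RightAct S B]
    (f : A → B) (C : Set A) : Prop :=
  ∀ a ∈ C, ∀ s : S, f (a ⊛ s) = f a ⊛ s

/-- A subact: a nonempty subset closed under the action. -/
def IsSubact (S : Type u) [Monoid S] {A : Type u} [RightAct S A] (C : Set A) : Prop :=
  C.Nonempty ∧ ∀ a ∈ C, ∀ s : S, a ⊛ s ∈ C

/-- A zero element of an act: fixed by the action of every `s ∈ S`. -/
def IsZeroElem (S : Type u) [Monoid S] {A : Type u} [RightAct S A] (θ : A) : Prop :=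
  ∀ s : S, θ ⊛ s = θ

/-- A subset `D` (viewed as an act) is decomposable: it is the disjoint union of two
nonempty subacts. -/
def DecomposableSet (S : Type u) [Monoid S] {A : Type u} [RightAct S A] (D : Set A) : Prop :=
  ∃ B C : Set A, IsSubact S B ∧ IsSubact S C ∧ B ∪ C = D ∧ B ∩ C = ∅

/-- A subset (viewed as an act) is indecomposable. -/
def IndecomposableSet (S : Type u) [Monoid S] {A : Type u} [RightAct S A] (D : Set A) : Prop :=
  ¬ DecomposableSet S D

/-- The act `A` is decomposable. -/
def Decomposable (S : Type u) [Monoid S] (A : Type u) [RightAct S A] : Prop :=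
  DecomposableSet S (Set.univ : Set A)

/-- The act `A` is indecomposable. -/
def Indecomposable (S : Type u) [Monoid S] (A : Type u) [RightAct S A] : Prop :=
  ¬ Decomposable S A

/-- A cyclic act: generated by a single element. -/
def CyclicAct (S : Type u) [Monoid S] (A : Type u) [RightAct S A] : Prop :=
  ∃ a : A, ∀ x : A, ∃ s : S, x = a ⊛ s

/-- `A` is a retract of `B`. -/
def IsRetractOf (S : Type u) [Monoid S] (A B : Type u) [RightAct S A] [RightAct S B] : Prop :=
  ∃ (i : A → B) (p : B → A), IsActHom S i ∧ IsActHom S p ∧ ∀ a : A, p (i a) = a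

/-- `Q` is an injective act: every homomorphism from a subact `C` of any act `B` into `Q`
extends to `B`. -/
def ActInjective (S : Type u) [Monoid S] (Q : Type u) [RightAct S Q] : Prop :=
  ∀ (B : Type u) [RightAct S B], ∀ C : Set B, IsSubact S C →
    ∀ f : B → Q, IsActHomOn S f C →
      ∃ g : B → Q, IsActHom S g ∧ Set.EqOn g f C

/-- `Q` is InC-injective: injective relative to all embeddings into indecomposable acts. -/
def InCInjective (S : Type u) [Monoid S] (Q : Type u) [RightAct S Q] : Prop :=
  ∀ (B : Type u) [RightAct S B], Indecomposable S B → ∀ C : Set B, IsSubact S C →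
    ∀ f : B → Q, IsActHomOn S f C →
      ∃ g : B → Q, IsActHom S g ∧ Set.EqOn g f C

/-- `Q` is InD-injective: injective relative to all embeddings of indecomposable acts. -/
def InDInjective (S : Type u) [Monoid S] (Q : Type u) [RightAct S Q] : Prop :=
  ∀ (B : Type u) [RightAct S B], ∀ C : Set B, IsSubact S C → IndecomposableSet S C →
    ∀ f : B → Q, IsActHomOn S f C →
      ∃ g : B → Q, IsActHom S g ∧ Set.EqOn g f C

/-- `Q` is PInD-injective: every monomorphism from an indecomposable subact extends. -/
def PInDInjective (S : Type u) [Monoid S] (Q : Type u) [RightAct S Q] : Prop :=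
  ∀ (B : Type u) [RightAct S B], ∀ C : Set B, IsSubact S C → IndecomposableSet S C →
    ∀ f : B → Q, IsActHomOn S f C → Set.InjOn f C →
      ∃ g : B → Q, IsActHom S g ∧ Set.EqOn g f C

/-- `A` is quasi injective: homomorphisms from subacts of `A` to `A` extend to `A`. -/
def QuasiInjective (S : Type u) [Monoid S] (A : Type u) [RightAct S A] : Prop :=
  ∀ C : Set A, IsSubact S C → ∀ f : A → A, IsActHomOn S f C →
    ∃ g : A → A, IsActHom S g ∧ Set.EqOn g f C

/-- `A` is pseudo injective: monomorphisms from subacts of any act into `A` extend. -/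
def PseudoInjective (S : Type u) [Monoid S] (A : Type u) [RightAct S A] : Prop :=
  ∀ (C : Type u) [RightAct S C], ∀ B : Set C, IsSubact S B →
    ∀ f : C → A, IsActHomOn S f B → Set.InjOn f B →
      ∃ g : C → A, IsActHom S g ∧ Set.EqOn g f B

/-- A subact `Q` of `A` (viewed as an act in its own right) is injective. -/
def ActInjectiveSet (S : Type u) [Monoid S] {A : Type u} [RightAct S A] (Q : Set A) : Prop :=
  ∀ (B : Type u) [RightAct S B], ∀ C : Set B, IsSubact S C →
    ∀ f : B → A, IsActHomOn S f C → (∀ c ∈ C, f c ∈ Q) →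
      ∃ g : B → A, IsActHom S g ∧ (∀ b : B, g b ∈ Q) ∧ Set.EqOn g f C

/-- A subact `Q` of `A` (viewed as an act in its own right) is InD-injective. -/
def InDInjectiveSet (S : Type u) [Monoid S] {A : Type u} [RightAct S A] (Q : Set A) : Prop :=
  ∀ (B : Type u) [RightAct S B], ∀ C : Set B, IsSubact S C → IndecomposableSet S C →
    ∀ f : B → A, IsActHomOn S f C → (∀ c ∈ C, f c ∈ Q) →
      ∃ g : B → A, IsActHom S g ∧ (∀ b : B, g b ∈ Q) ∧ Set.EqOn g f C

/-- A subact `Q` of `A` (viewed as an act in its own right) is PInD-injective. -/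
def PInDInjectiveSet (S : Type u) [Monoid S] {A : Type u} [RightAct S A] (Q : Set A) : Prop :=
  ∀ (B : Type u) [RightAct S B], ∀ C : Set B, IsSubact S C → IndecomposableSet S C →
    ∀ f : B → A, IsActHomOn S f C → Set.InjOn f C → (∀ c ∈ C, f c ∈ Q) →
      ∃ g : B → A, IsActHom S g ∧ (∀ b : B, g b ∈ Q) ∧ Set.EqOn g f C

/-- The monoid `S` as a right act over itself, by multiplication. -/
instance selfAct (S : Type u) [Monoid S] : RightAct S S where
  act a s := a * s
  act_one := mul_one
  act_mul a s t := mul_assoc a s t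
  nonempty := ⟨1⟩

/-- `Q` is weakly injective: homomorphisms from right ideals of `S` into `Q` extend to `S`. -/
def WeaklyInjective (S : Type u) [Monoid S] (Q : Type u) [RightAct S Q] : Prop :=
  ∀ I : Set S, IsSubact S I → ∀ f : S → Q, IsActHomOn S f I →
    ∃ g : S → Q, IsActHom S g ∧ Set.EqOn g f I

/-- The relation whose equivalence closure has the indecomposable components as classes. -/
def ActRel (S : Type u) [Monoid S] {A : Type u} [RightAct S A] (a b : A) : Prop :=
  ∃ s : S, b = a ⊛ s

/-- The indecomposable component of the element `a` of an act. -/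
def ActComponent (S : Type u) [Monoid S] {A : Type u} [RightAct S A] (a : A) : Set A :=
  {b | Relation.EqvGen (ActRel S) a b}

section AuxLemmas

variable {S : Type u} [Monoid S]

/-- A cyclic subset of an act is indecomposable. -/
lemma cyclic_indecomposableSet {A : Type u} [RightAct S A] (a : A) :
    IndecomposableSet S {x | ∃ s : S, x = a ⊛ s} := by
  rintro ⟨B, C, hB, hC, hU, hD⟩
  have ha : a ∈ B ∪ C := by
    rw [hU]; exact ⟨1, (RightAct.act_one a).symm⟩
  rcases ha with h | h
  · obtain ⟨c, hc⟩ := hC.1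
    have hcI : ∃ s : S, c = a ⊛ s := by
      have : c ∈ B ∪ C := Set.mem_union_right B hc
      rwa [hU] at this
    obtain ⟨s, rfl⟩ := hcI
    have : a ⊛ s ∈ B ∩ C := ⟨hB.2 a h s, hc⟩
    rw [hD] at this
    exact this
  · obtain ⟨b, hb⟩ := hB.1
    have hbI : ∃ s : S, b = a ⊛ s := by
      have : b ∈ B ∪ C := Set.mem_union_left C hb
      rwa [hU] at this
    obtain ⟨s, rfl⟩ := hbI
    have : a ⊛ s ∈ B ∩ C := ⟨hb, hC.2 a h s⟩
    rw [hD] at this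
    exact this

/-- The image of an indecomposable subact under a homomorphism is indecomposable. -/
lemma image_indecomposableSet {A P : Type u} [RightAct S A] [RightAct S P]
    (φ : A → P) (D : Set A) (hD : IsSubact S D) (hφ : IsActHomOn S φ D)
    (hInd : IndecomposableSet S D) : IndecomposableSet S (φ '' D) := by
  rintro ⟨B, C, hB, hC, hU, hdisj⟩
  apply hInd
  refine ⟨D ∩ φ ⁻¹' B, D ∩ φ ⁻¹' C, ⟨?_, ?_⟩, ⟨?_, ?_⟩, ?_, ?_⟩
  · obtain ⟨b, hb⟩ := hB.1
    have : b ∈ φ '' D := by rw [← hU]; exact Set.mem_union_left C hb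
    obtain ⟨d, hd, rfl⟩ := this
    exact ⟨d, hd, hb⟩
  · rintro x ⟨hxD, hxB⟩ s
    refine ⟨hD.2 x hxD s, ?_⟩
    have : φ (x ⊛ s) = φ x ⊛ s := hφ x hxD s
    simp only [Set.mem_preimage, this]
    exact hB.2 _ hxB s
  · obtain ⟨c, hc⟩ := hC.1
    have : c ∈ φ '' D := by rw [← hU]; exact Set.mem_union_right B hc
    obtain ⟨d, hd, rfl⟩ := this
    exact ⟨d, hd, hc⟩
  · rintro x ⟨hxD, hxC⟩ s
    refine ⟨hD.2 x hxD s, ?_⟩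
    have : φ (x ⊛ s) = φ x ⊛ s := hφ x hxD s
    simp only [Set.mem_preimage, this]
    exact hC.2 _ hxC s
  · ext x
    constructor
    · rintro (⟨h, _⟩ | ⟨h, _⟩) <;> exact h
    · intro hx
      have : φ x ∈ B ∪ C := by rw [hU]; exact ⟨x, hx, rfl⟩
      rcases this with h | h
      · exact Or.inl ⟨hx, h⟩
      · exact Or.inr ⟨hx, h⟩
  · ext x
    simp only [Set.mem_inter_iff, Set.mem_preimage, Set.mem_empty_iff_false, iff_false]
    rintro ⟨⟨_, h1⟩, ⟨_, h2⟩⟩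
    have : φ x ∈ B ∩ C := ⟨h1, h2⟩
    rw [hdisj] at this
    exact this

attribute [local instance] Classical.propDecidable

/-- The pushout act: glue the complement of `C` in `B` onto `S` along `f`. -/
noncomputable def pushoutAct {B : Type u} [RightAct S B] (C : Set B) (f : B → S)
    (hCc : ∀ a ∈ C, ∀ s : S, a ⊛ s ∈ C) (hf : IsActHomOn S f C) :
    RightAct S ({b : B // b ∉ C} ⊕ S) where
  act p s :=
    Sum.elim
      (fun b => if h : (b.1 ⊛ s) ∈ C then Sum.inr (f (b.1 ⊛ s)) else Sum.inl ⟨b.1 ⊛ s, h⟩)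
      (fun q => Sum.inr (q * s)) p
  act_one := by
    rintro (⟨b, hb⟩ | q)
    · simp only [Sum.elim_inl, RightAct.act_one, dif_neg hb]
    · simp only [Sum.elim_inr, mul_one]
  act_mul := by
    rintro (⟨b, hb⟩ | q) s t
    · by_cases h1 : (b ⊛ s) ∈ C
      · have h2 : b ⊛ (s * t) ∈ C := by
          rw [← RightAct.act_mul]; exact hCc _ h1 t
        simp only [Sum.elim_inl, Sum.elim_inr, dif_pos h1, dif_pos h2]
        have h3 : f ((b ⊛ s) ⊛ t) = f (b ⊛ s) ⊛ t := hf _ h1 t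
        rw [RightAct.act_mul] at h3
        rw [h3]
        rfl
      · by_cases h2 : (b ⊛ s) ⊛ t ∈ C
        · have h2' : b ⊛ (s * t) ∈ C := by rwa [← RightAct.act_mul]
          simp only [Sum.elim_inl, dif_neg h1, dif_pos h2, dif_pos h2', RightAct.act_mul]
        · have h2' : b ⊛ (s * t) ∉ C := by rwa [← RightAct.act_mul]
          simp only [Sum.elim_inl, dif_neg h1, dif_neg h2, dif_neg h2', RightAct.act_mul]
    · simp only [Sum.elim_inr, mul_assoc]
  nonempty := ⟨Sum.inr 1⟩

/-- Core lemma: an indecomposable PInD-injective right ideal is injective. -/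
lemma core_pind_injective (I : Set S) (hI : IsSubact S I)
    (hInd : IndecomposableSet S I) (hP : PInDInjectiveSet S I) :
    ActInjectiveSet S I := by
  intro B _ C hC f hf hfI
  classical
  letI instP : RightAct S ({b : B // b ∉ C} ⊕ S) := pushoutAct C f hC.2 hf
  have hinr : ∀ (q s : S), (Sum.inr q : {b : B // b ∉ C} ⊕ S) ⊛ s = Sum.inr (q * s) :=
    fun _ _ => rfl
  have hinl : ∀ (b : B) (hb : b ∉ C) (s : S),
      (Sum.inl ⟨b, hb⟩ : {b : B // b ∉ C} ⊕ S) ⊛ s =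
        if h : (b ⊛ s) ∈ C then Sum.inr (f (b ⊛ s)) else Sum.inl ⟨b ⊛ s, h⟩ :=
    fun _ _ _ => rfl
  set ι : B → ({b : B // b ∉ C} ⊕ S) :=
    fun b => if h : b ∈ C then Sum.inr (f b) else Sum.inl ⟨b, h⟩ with hιdef
  have hιhom : IsActHom S ι := by
    intro b s
    by_cases hb : b ∈ C
    · have hbs : b ⊛ s ∈ C := hC.2 b hb s
      simp only [hιdef, dif_pos hb, dif_pos hbs, hinr]
      exact congrArg Sum.inr (hf b hb s)
    · by_cases hbs : b ⊛ s ∈ C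
      · simp only [hιdef, dif_neg hb, dif_pos hbs, hinl b hb s, dif_pos hbs]
      · simp only [hιdef, dif_neg hb, dif_neg hbs, hinl b hb s]
  have hC'sub : IsSubact S (Sum.inr '' I : Set ({b : B // b ∉ C} ⊕ S)) := by
    constructor
    · obtain ⟨q, hq⟩ := hI.1
      exact ⟨Sum.inr q, q, hq, rfl⟩
    · rintro p ⟨q, hq, rfl⟩ s
      rw [hinr]
      exact ⟨q * s, hI.2 q hq s, rfl⟩
  have hC'ind : IndecomposableSet S (Sum.inr '' I : Set ({b : B // b ∉ C} ⊕ S)) := by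
    apply image_indecomposableSet (Sum.inr : S → ({b : B // b ∉ C} ⊕ S)) I hI _ hInd
    intro q _ s
    rw [hinr]; rfl
  have hf'hom : IsActHomOn S (Sum.elim (fun _ => (1 : S)) id :
      ({b : B // b ∉ C} ⊕ S) → S) (Sum.inr '' I) := by
    rintro p ⟨q, _, rfl⟩ s
    rw [hinr]; rfl
  have hf'inj : Set.InjOn (Sum.elim (fun _ => (1 : S)) id :
      ({b : B // b ∉ C} ⊕ S) → S) (Sum.inr '' I) := by
    rintro p ⟨q1, _, rfl⟩ p' ⟨q2, _, rfl⟩ hq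
    simp only [Sum.elim_inr, id] at hq
    rw [hq]
  have hf'I : ∀ p ∈ (Sum.inr '' I : Set ({b : B // b ∉ C} ⊕ S)),
      (Sum.elim (fun _ => (1 : S)) id : ({b : B // b ∉ C} ⊕ S) → S) p ∈ I := by
    rintro p ⟨q, hq, rfl⟩
    exact hq
  obtain ⟨g, hghom, hgI, hgeq⟩ :=
    hP ({b : B // b ∉ C} ⊕ S) (Sum.inr '' I) hC'sub hC'ind
      (Sum.elim (fun _ => (1 : S)) id) hf'hom hf'inj hf'I
  refine ⟨fun b => g (ι b), ?_, fun b => hgI (ι b), ?_⟩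
  · intro b s
    show g (ι (b ⊛ s)) = g (ι b) ⊛ s
    rw [hιhom b s, hghom (ι b) s]
  · intro c hc
    show g (ι c) = f c
    have h1 : ι c = Sum.inr (f c) := by simp only [hιdef, dif_pos hc]
    have h2 : (Sum.inr (f c) : {b : B // b ∉ C} ⊕ S) ∈ Sum.inr '' I :=
      ⟨f c, hfI c hc, rfl⟩
    rw [h1, hgeq h2]
    rfl

/-- The whole act `S` is indecomposable as a subset. -/
lemma univ_indecomposableSet : IndecomposableSet S (Set.univ : Set S) := by
  rintro ⟨B, C, hB, hC, hU, hD⟩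
  have h1 : (1 : S) ∈ B ∪ C := by rw [hU]; trivial
  rcases h1 with h | h
  · obtain ⟨c, hc⟩ := hC.1
    have hcB : c ∈ B := by
      have := hB.2 1 h c
      rwa [show (1 : S) ⊛ c = c from one_mul c] at this
    have : c ∈ B ∩ C := ⟨hcB, hc⟩
    rw [hD] at this
    exact this
  · obtain ⟨b, hb⟩ := hB.1
    have hbC : b ∈ C := by
      have := hC.2 1 h b
      rwa [show (1 : S) ⊛ b = b from one_mul b] at this
    have : b ∈ B ∩ C := ⟨hb, hbC⟩
    rw [hD] at this
    exact this

end AuxLemmas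

/-- TFAE: (i) all right ideals of `S` are InD-injective; (ii) all
indecomposable right ideals are InD-injective; (iii) all right ideals are
PInD-injective; (iv) all indecomposable right ideals are PInD-injective; (v) all
indecomposable right ideals are injective; (vi) `S` is a regular right self-injective
monoid whose indecomposable right ideals are all principal. -/
theorem ideals_inDInjective_tfae (S : Type u) [Monoid S] :
    List.TFAE [
      ∀ I : Set S, IsSubact S I → InDInjectiveSet S I,
      ∀ I : Set S, IsSubact S I → IndecomposableSet S I → InDInjectiveSet S I,
      ∀ I : Set S, IsSubact S I → PInDInjectiveSet S I,
      ∀ I : Set S, IsSubact S I → IndecomposableSet S I → PInDInjectiveSet S I,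
      ∀ I : Set S, IsSubact S I → IndecomposableSet S I → ActInjectiveSet S I,
      (∀ a : S, ∃ x : S, a = a * x * a) ∧ ActInjective S S ∧
        ∀ I : Set S, IsSubact S I → IndecomposableSet S I →
          ∃ a : S, I = {x : S | ∃ s : S, x = a * s} ] := by
  tfae_have 1 → 3
  · intro h I hI B _ C hC hCind f hf _ hfI
    exact h I hI B C hC hCind f hf hfI
  tfae_have 3 → 4
  · intro h I hI _
    exact h I hI
  tfae_have 2 → 4
  · intro h I hI hInd B _ C hC hCind f hf _ hfI
    exact h I hI hInd B C hC hCind f hf hfI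
  tfae_have 4 → 5
  · intro h I hI hInd
    exact core_pind_injective I hI hInd (h I hI hInd)
  tfae_have 5 → 2
  · intro h I hI hInd B _ C hC _ f hf hfI
    exact h I hI hInd B C hC f hf hfI
  tfae_have 4 → 6
  · intro h
    have hprinc : ∀ I : Set S, IsSubact S I → IndecomposableSet S I →
        ∃ a : S, I = {x : S | ∃ s : S, x = a * s} := by
      intro I hI hInd
      have hid : IsActHomOn S (id : S → S) I := fun _ _ _ => rfl
      obtain ⟨g, hghom, hgI, hgeq⟩ :=
        h I hI hInd S I hI hInd id hid (fun _ _ _ _ hx => hx) (fun c hc => hc)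
      refine ⟨g 1, ?_⟩
      ext x
      simp only [Set.mem_setOf_eq]
      constructor
      · intro hx
        refine ⟨x, ?_⟩
        have h1 : g x = x := hgeq hx
        have h2 : g (1 ⊛ x) = g 1 ⊛ x := hghom 1 x
        rw [show (1 : S) ⊛ x = x from one_mul x] at h2
        calc x = g x := h1.symm
          _ = g 1 ⊛ x := h2
          _ = g 1 * x := rfl
      · rintro ⟨s, rfl⟩
        have h2 : g (1 ⊛ s) = g 1 ⊛ s := hghom 1 s
        rw [show (1 : S) ⊛ s = s from one_mul s] at h2
        have : g 1 * s = g s := h2.symm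
        rw [this]
        exact hgI s
    refine ⟨?_, ?_, hprinc⟩
    · -- regularity
      intro a
      set I : Set S := {x | ∃ s : S, x = a * s} with hIdef
      have hI : IsSubact S I := by
        constructor
        · exact ⟨a, 1, (mul_one a).symm⟩
        · rintro x ⟨s, rfl⟩ t
          exact ⟨s * t, mul_assoc a s t⟩
      have hInd : IndecomposableSet S I := cyclic_indecomposableSet (S := S) (A := S) a
      have hidI : IsActHomOn S (id : S → S) I := fun _ _ _ => rfl
      obtain ⟨g, hghom, hgI, hgeq⟩ :=
        h I hI hInd S I hI hInd id hidI (fun _ _ _ _ hx => hx) (fun c hc => hc)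
      obtain ⟨x, hx⟩ := hgI 1
      refine ⟨x, ?_⟩
      have ha : a ∈ I := ⟨1, (mul_one a).symm⟩
      have h1 : g a = a := hgeq ha
      have h2 : g (1 ⊛ a) = g 1 ⊛ a := hghom 1 a
      rw [show (1 : S) ⊛ a = a from one_mul a] at h2
      calc a = g a := h1.symm
        _ = g 1 ⊛ a := h2
        _ = g 1 * a := rfl
        _ = a * x * a := by rw [hx]
    · -- self-injectivity
      have huniv : IsSubact S (Set.univ : Set S) :=
        ⟨⟨1, trivial⟩, fun _ _ _ => trivial⟩
      have hact : ActInjectiveSet S (Set.univ : Set S) :=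
        core_pind_injective _ huniv univ_indecomposableSet
          (h _ huniv univ_indecomposableSet)
      intro B _ C hC f hf
      obtain ⟨g, hghom, _, hgeq⟩ := hact B C hC f hf (fun _ _ => trivial)
      exact ⟨g, hghom, hgeq⟩
  tfae_have 6 → 1
  · rintro ⟨hreg, hinj, hprinc⟩ I hI B _ C hC hCind f hf hfI
    -- the image of C is an indecomposable right ideal
    have hJsub : IsSubact S (f '' C) := by
      constructor
      · obtain ⟨c, hc⟩ := hC.1
        exact ⟨f c, c, hc, rfl⟩
      · rintro x ⟨c, hc, rfl⟩ s
        refine ⟨c ⊛ s, hC.2 c hc s, ?_⟩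
        rw [hf c hc s]
    have hJind : IndecomposableSet S (f '' C) :=
      image_indecomposableSet f C hC hf hCind
    obtain ⟨a, ha⟩ := hprinc (f '' C) hJsub hJind
    obtain ⟨x, hx⟩ := hreg a
    have heJ : ∀ y ∈ f '' C, (a * x) * y = y := by
      intro y hy
      rw [ha] at hy
      obtain ⟨s, rfl⟩ := hy
      calc (a * x) * (a * s) = a * x * a * s := (mul_assoc (a * x) a s).symm
        _ = a * s := by rw [← hx]
    have heI : ∀ t : S, (a * x) * t ∈ I := by
      intro t
      have hmem : (a * x) * t ∈ f '' C := by
        rw [ha]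
        exact ⟨x * t, mul_assoc a x t⟩
      obtain ⟨c, hc, hct⟩ := hmem
      rw [← hct]
      exact hfI c hc
    obtain ⟨g0, hg0hom, hg0eq⟩ := hinj B C hC f hf
    refine ⟨fun b => (a * x) * g0 b, ?_, fun b => heI (g0 b), ?_⟩
    · intro b s
      show (a * x) * g0 (b ⊛ s) = ((a * x) * g0 b) ⊛ s
      rw [hg0hom b s]
      exact (mul_assoc (a * x) (g0 b) s).symm
    · intro c hc
      show (a * x) * g0 c = f c
      rw [hg0eq hc]
      exact heJ (f c) ⟨c, hc, rfl⟩
  tfae_finish
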